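/- Let p : ℕ → ℕ be a profile function and let x be a Milnor matrix that is B-trivial for p and has disjoint diagonals, with row sums r_i and diagonal sums t_k. Then for every k ≥ 1 the binary digits of r_k mod 2^{p(k)} form a subset of the binary digits of t_k mod 2^{p(k)}, i.e. Nat.land (r_k % 2^{p(k)}) (t_k % 2^{p(k)}) = r_k % 2^{p(k)}. (This is the assertion that multiplication by a B-trivial matrix with odd coefficient can only add non-zero bits to the B-signature, so it cannot lower the signature.) -/

import Mathlib

/-- The row sums `r_i = ∑_{j ≥ 0} 2^j · x (i, j)` of a finitely supported
matrix `x : ℕ × ℕ →₀ ℕ`. -/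
def milnorRowSum (x : ℕ × ℕ →₀ ℕ) (i : ℕ) : ℕ :=
  x.sum fun ij v => if ij.1 = i then 2 ^ ij.2 * v else 0

/-- The diagonal sums `t_k = ∑_{i + j = k} x (i, j)` of a finitely supported
matrix `x : ℕ × ℕ →₀ ℕ`. -/
def milnorDiagSum (x : ℕ × ℕ →₀ ℕ) (k : ℕ) : ℕ :=
  x.sum fun ij v => if ij.1 + ij.2 = k then v else 0

/-- A Milnor matrix (a finitely supported `x : ℕ × ℕ → ℕ` with `x (0,0) = 0`) is `B`-trivial
for a profile function `p : ℕ → ℕ` if `2 ^ (p i - j) ∣ x (i, j)` whenever `i ≥ 1` and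
`1 ≤ j ≤ p i`. -/
def IsBTrivial (p : ℕ → ℕ) (x : ℕ × ℕ →₀ ℕ) : Prop :=
  ∀ i j : ℕ, 1 ≤ i → 1 ≤ j → j ≤ p i → 2 ^ (p i - j) ∣ x (i, j)

/-- A Milnor matrix has disjoint diagonals if for every `k` the entries `x (i, j)` with
`i + j = k` are pairwise bitwise disjoint. -/
def HasDisjointDiagonals (x : ℕ × ℕ →₀ ℕ) : Prop :=
  ∀ i j i' j' : ℕ, i + j = i' + j' → (i, j) ≠ (i', j') →
    Nat.land (x (i, j)) (x (i', j')) = 0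

/-!
Modulo `2 ^ p k`, `B`-triviality kills every term `2 ^ j * x (k, j)` with `j ≥ 1` of the row sum
`r_k`, leaving `x (k, 0)`. The diagonal sum `t_k` has `x (k, 0)` as a summand, and since the entries
of a diagonal are bitwise disjoint, `t_k` is their bitwise or; so every bit of `x (k, 0)` below
`p k` is a bit of `t_k`.
-/

namespace Nat

theorem add_eq_or_of_and_eq_zero {a b : ℕ} (h : a &&& b = 0) : a + b = a ||| b := by
  induction a using Nat.strong_induction_on generalizing b with
  | _ a ih =>
    rcases Nat.eq_zero_or_pos a with rfl | ha
    · simp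
    have hhalf : a / 2 + b / 2 = (a ||| b) / 2 := by
      rw [Nat.or_div_two]
      exact ih _ (Nat.div_lt_self ha one_lt_two) (by rw [← Nat.and_div_two, h])
    have hbit : (a &&& b) % 2 = 0 := by rw [h]
    have := Nat.and_mod_two_eq_one (a := a) (b := b)
    have := Nat.or_mod_two_eq_one (a := a) (b := b)
    omega

theorem and_sum_eq_zero {ι : Type*} [DecidableEq ι] {s : Finset ι} {f : ι → ℕ}
    (hf : (s : Set ι).Pairwise fun i j => f i &&& f j = 0) {a : ℕ}
    (ha : ∀ i ∈ s, a &&& f i = 0) : a &&& ∑ i ∈ s, f i = 0 := by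
  induction s using Finset.induction_on generalizing a with
  | empty => simp
  | insert c s hc ih =>
    rw [Finset.coe_insert, Set.pairwise_insert] at hf
    have hcs : f c &&& ∑ i ∈ s, f i = 0 :=
      ih hf.1 fun i hi => (hf.2 i hi (ne_of_mem_of_not_mem hi hc).symm).1
    rw [Finset.sum_insert hc, add_eq_or_of_and_eq_zero hcs, Nat.and_or_distrib_left,
      ha c (Finset.mem_insert_self c s), ih hf.1 fun i hi => ha i (Finset.mem_insert_of_mem hi)]
    rfl

theorem mod_two_pow_and_or_mod_two_pow (a b n : ℕ) :
    a % 2 ^ n &&& (a ||| b) % 2 ^ n = a % 2 ^ n := by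
  apply Nat.eq_of_testBit_eq
  intro i
  simp only [Nat.testBit_land, Nat.testBit_mod_two_pow, Nat.testBit_lor]
  cases a.testBit i <;> simp

end Nat

section Milnor

open Finset

variable {p : ℕ → ℕ} {x : ℕ × ℕ →₀ ℕ}

theorem milnorRowSum_eq_add (x : ℕ × ℕ →₀ ℕ) (i : ℕ) :
    milnorRowSum x i =
      x (i, 0) + x.sum fun ij v => if ij.1 = i ∧ ij.2 ≠ 0 then 2 ^ ij.2 * v else 0 := by
  rw [milnorRowSum, ← Finsupp.sum_ite_self_eq' x (i, 0), ← Finsupp.sum_add]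
  refine Finsupp.sum_congr fun ⟨i', j⟩ _ => ?_
  by_cases hi : i' = i <;> by_cases hj : j = 0 <;> simp [hi, hj]

theorem IsBTrivial.two_pow_dvd (htriv : IsBTrivial p x) {i j : ℕ} (hi : 1 ≤ i) (hj : 1 ≤ j) :
    2 ^ p i ∣ 2 ^ j * x (i, j) := by
  rcases le_or_gt j (p i) with hle | hlt
  · rw [← Nat.sub_add_cancel hle, pow_add, mul_comm (2 ^ (p i - j))]
    exact mul_dvd_mul_left _ (htriv i j hi hj hle)
  · exact (pow_dvd_pow 2 hlt.le).mul_right _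

theorem IsBTrivial.milnorRowSum_mod (htriv : IsBTrivial p x) {k : ℕ} (hk : 1 ≤ k) :
    milnorRowSum x k % 2 ^ p k = x (k, 0) % 2 ^ p k := by
  obtain ⟨c, hc⟩ : 2 ^ p k ∣ x.sum fun ij v => if ij.1 = k ∧ ij.2 ≠ 0 then 2 ^ ij.2 * v else 0 :=
    Finset.dvd_sum fun ⟨i, j⟩ _ => by
      dsimp only
      split_ifs with h
      · obtain ⟨rfl, hj⟩ := h
        exact htriv.two_pow_dvd hk (Nat.one_le_iff_ne_zero.2 hj)
      · exact dvd_zero _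
  rw [milnorRowSum_eq_add, hc, Nat.add_mul_mod_self_left]

theorem milnorDiagSum_eq_sum_antidiagonal (x : ℕ × ℕ →₀ ℕ) (k : ℕ) :
    milnorDiagSum x k = ∑ ij ∈ antidiagonal k, x ij := by
  rw [milnorDiagSum, Finsupp.sum, ← sum_filter]
  refine sum_subset (fun ij hij => by simp_all) fun ij _ hij => ?_
  simp_all

theorem HasDisjointDiagonals.pairwise_antidiagonal (hdisj : HasDisjointDiagonals x) (k : ℕ) :
    (antidiagonal k : Set (ℕ × ℕ)).Pairwise fun ij ij' => x ij &&& x ij' = 0 := by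
  rintro ⟨i, j⟩ hij ⟨i', j'⟩ hij' hne
  rw [mem_coe, HasAntidiagonal.mem_antidiagonal] at hij hij'
  exact hdisj i j i' j' (hij.trans hij'.symm) hne

theorem HasDisjointDiagonals.milnorDiagSum_eq_or (hdisj : HasDisjointDiagonals x) (k : ℕ) :
    milnorDiagSum x k = x (k, 0) ||| ∑ ij ∈ (antidiagonal k).erase (k, 0), x ij := by
  have hk0 : (k, 0) ∈ antidiagonal k := HasAntidiagonal.mem_antidiagonal.2 (add_zero k)
  rw [milnorDiagSum_eq_sum_antidiagonal, ← add_sum_erase _ _ hk0]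
  refine Nat.add_eq_or_of_and_eq_zero (Nat.and_sum_eq_zero ?_ fun ij hij => ?_)
  · exact (hdisj.pairwise_antidiagonal k).mono (coe_subset.2 (erase_subset _ _))
  · exact hdisj.pairwise_antidiagonal k hk0 (mem_of_mem_erase hij) (ne_of_mem_erase hij).symm

end Milnor

theorem land_rowSum_diagSum_of_isBTrivial_general (p : ℕ → ℕ) (x : ℕ × ℕ →₀ ℕ)
    (htriv : IsBTrivial p x) (hdisj : HasDisjointDiagonals x)
    (k : ℕ) (hk : 1 ≤ k) :
    Nat.land (milnorRowSum x k % 2 ^ p k) (milnorDiagSum x k % 2 ^ p k)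
      = milnorRowSum x k % 2 ^ p k := by
  rw [htriv.milnorRowSum_mod hk, hdisj.milnorDiagSum_eq_or k]
  exact Nat.mod_two_pow_and_or_mod_two_pow _ _ _

/-- If the Milnor matrix `x` is `B`-trivial for the profile function `p` and has disjoint
diagonals, then for every `k ≥ 1` the binary digits of `r_k mod 2 ^ (p k)` form a subset of
the binary digits of `t_k mod 2 ^ (p k)`:  multiplication with a `B`-trivial matrix can only
add non-zero bits to the `B`-signature. -/
theorem land_rowSum_diagSum_of_isBTrivial (p : ℕ → ℕ) (x : ℕ × ℕ →₀ ℕ)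
    (hx0 : x (0, 0) = 0) (htriv : IsBTrivial p x) (hdisj : HasDisjointDiagonals x)
    (k : ℕ) (hk : 1 ≤ k) :
    Nat.land (milnorRowSum x k % 2 ^ p k) (milnorDiagSum x k % 2 ^ p k)
      = milnorRowSum x k % 2 ^ p k :=
  land_rowSum_diagSum_of_isBTrivial_general p x htriv hdisj k hk
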